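/- Let a, b, c, d, e, f be integers such that the four triples (a,b,c), (c,d,e), (a,e,f), (b,d,f) are admissible, set b̄ := n−1−b, s := max(0, n−1−2e, (d+f−b)−(d+e−c), (b+f−d)+(c+d−e)−(n−1)) and S := min(c+d−e, a+f−e, n−1−(a+e−f), n−1−(d+e−c)), and let z be an integer with s ≤ z ≤ S. Then [2c; a+b+c+1−n] · [(b+c−a)+(a+f−e)−z; b+c−a] · [(a+e−f)+z; a+c−b] = [2c; a+b̄+c+1−n] · [(b̄+c−a)+(a+f−e)−z; b̄+c−a] · [(a+e−f)+z; a+c−b̄]. -/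

import Mathlib

/-- The quantum number `{a} = ξ^a - ξ^{-a}` where `ξ = exp(πi/n)`. -/
noncomputable def qnum (n : ℕ) (a : ℂ) : ℂ :=
  Complex.exp (Real.pi * Complex.I * a / n) - Complex.exp (-(Real.pi * Complex.I * a) / n)

/-- The quantum factorial `{k}! = ∏_{j=1}^k {j}`. -/
noncomputable def qfact (n k : ℕ) : ℂ :=
  ∏ j ∈ Finset.range k, qnum n (j + 1)

/-- The quantum binomial `[a; a-k] = ∏_{j=0}^{k-1} {a-j}/{a-k-j}` (top entry `a`,
difference of the two entries the natural number `k`), an empty product being `1`. -/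
noncomputable def qbinom (n : ℕ) (a : ℂ) (k : ℕ) : ℂ :=
  ∏ j ∈ Finset.range k, qnum n (a - j) / qnum n ((k : ℂ) - j)

/-- The quantum binomial `[a; b]` for integer entries. -/
noncomputable def qbinomZ (n : ℕ) (a b : ℤ) : ℂ :=
  qbinom n (a : ℂ) (a - b).toNat

/-- A triple of integers `(i,j,k)` is admissible. -/
def Admissible (n : ℕ) (i j k : ℤ) : Prop :=
  0 < i ∧ i < (n : ℤ) - 1 ∧ 0 < j ∧ j < (n : ℤ) - 1 ∧ 0 < k ∧ k < (n : ℤ) - 1 ∧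
  (n : ℤ) - 1 < i + j + k ∧ i + j + k < 2 * ((n : ℤ) - 1) ∧
  0 < i + j - k ∧ i + j - k < (n : ℤ) - 1 ∧
  0 < j + k - i ∧ j + k - i < (n : ℤ) - 1 ∧
  0 < k + i - j ∧ k + i - j < (n : ℤ) - 1

/-! Write `[x; x-k] = {x}{x-1}⋯{x-k+1} / {k}!`. The six binomials have lengths `p, k, r` on the
left and `q, k, s` on the right, where `p = n-1-a-b+c`, `q = b+c-a`, `k = a+f-e-z`,
`r = b+e-c-f+z`, `s = n-1-b-c-f+e+z`, so that `p+k+r = q+k+s = n-1`. The falling products of the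
outer factors cover the same multiset of quantum numbers on both sides: both pairs of intervals end
at `2c` and `a+e-f+z` and start at `a+b+c+2-n` and `a+c-b+1`. The middle factors are `[q+k; q]` and
`[p+k; p]`, so what remains is `{q+k}! {s}! = {p+k}! {r}!`, and both sides equal `{n-1}!` by the
reflection `{n-m} = {m}`. -/

lemma qnum_natCast_sub (n : ℕ) (x : ℂ) : qnum n (n - x) = qnum n x := by
  rcases eq_or_ne n 0 with rfl | hn
  · simp [qnum]
  have hw : (Real.pi : ℂ) * Complex.I * (n - x) / n
      = Real.pi * Complex.I - Real.pi * Complex.I * x / n := by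
    field_simp
  unfold qnum
  rw [neg_div, neg_div, hw, neg_sub, Complex.exp_sub, Complex.exp_sub, Complex.exp_pi_mul_I,
    Complex.exp_neg]
  ring

lemma qnum_natCast_ne_zero {n m : ℕ} (hm : 0 < m) (hmn : m < n) : qnum n m ≠ 0 := by
  intro h
  rw [qnum, sub_eq_zero, Complex.exp_eq_exp_iff_exists_int] at h
  obtain ⟨k, hk⟩ := h
  have hn : (n : ℂ) ≠ 0 := by exact_mod_cast (show n ≠ 0 by omega)
  have hmk : (m : ℤ) = k * n := by
    field_simp at hk
    exact_mod_cast (by linear_combination hk / 2 : (m : ℂ) = k * n)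
  rcases le_or_gt k 0 with hk0 | hk0 <;> nlinarith

lemma qfact_ne_zero {n k : ℕ} (hk : k < n) : qfact n k ≠ 0 := by
  refine Finset.prod_ne_zero_iff.mpr fun j hj => ?_
  have hj : j < k := Finset.mem_range.mp hj
  exact_mod_cast qnum_natCast_ne_zero (n := n) (m := j + 1) (by omega) (by omega)

noncomputable def qdescFact (n : ℕ) (x : ℂ) (k : ℕ) : ℂ :=
  ∏ j ∈ Finset.range k, qnum n (x - j)

lemma qdescFact_add (n : ℕ) (x : ℂ) (k l : ℕ) :
    qdescFact n x (k + l) = qdescFact n x k * qdescFact n (x - k) l := by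
  simp only [qdescFact, Finset.prod_range_add, Nat.cast_add, sub_sub]

lemma qdescFact_natCast_self (n k : ℕ) : qdescFact n k k = qfact n k := by
  rw [qdescFact, ← Finset.prod_range_reflect]
  refine Finset.prod_congr rfl fun j hj => ?_
  have hj : j < k := Finset.mem_range.mp hj
  rw [Nat.sub_sub, Nat.cast_sub (by omega)]
  push_cast
  ring_nf

lemma qdescFact_natCast_sub_one (n k : ℕ) : qdescFact n ((n : ℂ) - 1) k = qfact n k := by
  refine Finset.prod_congr rfl fun j _ => ?_
  rw [← qnum_natCast_sub n ((j : ℂ) + 1)]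
  ring_nf

lemma qbinom_eq_qdescFact_div_qfact (n : ℕ) (x : ℂ) (k : ℕ) :
    qbinom n x k = qdescFact n x k / qfact n k := by
  rw [qbinom, Finset.prod_div_distrib, ← qdescFact_natCast_self]
  rfl

lemma qfact_add (n q k : ℕ) : qfact n (q + k) = qdescFact n ((q + k : ℕ) : ℂ) k * qfact n q := by
  rw [← qdescFact_natCast_self, add_comm q k, qdescFact_add, ← qdescFact_natCast_self]
  push_cast
  ring_nf

lemma qfact_add_of_add_one_eq {n m l : ℕ} (h : m + l + 1 = n) :
    qfact n (m + l) = qfact n m * qfact n l := by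
  have hml : ((m + l : ℕ) : ℂ) = n - 1 := by rw [← h]; push_cast; ring
  rw [add_comm m l, qfact_add, add_comm l m, hml, qdescFact_natCast_sub_one]

lemma qdescFact_mul_qdescFact_swap (n : ℕ) {x y : ℂ} {p q r s : ℕ}
    (hlen : p + r = q + s) (hxy : x - p = y - s) :
    qdescFact n x p * qdescFact n y r = qdescFact n x q * qdescFact n y s := by
  rcases le_total p q with hpq | hqp
  · obtain ⟨d, rfl⟩ := Nat.exists_eq_add_of_le hpq
    obtain rfl : r = s + d := by omega
    rw [qdescFact_add, qdescFact_add, hxy]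
    ring
  · obtain ⟨d, rfl⟩ := Nat.exists_eq_add_of_le hqp
    obtain rfl : s = r + d := by omega
    have hxy' : x - q = y - r := by push_cast at hxy; linear_combination hxy
    rw [qdescFact_add, qdescFact_add, hxy']
    ring

lemma qbinom_triple_swap {n : ℕ} {x y : ℂ} {p q k r s : ℕ} (hp : p + k + r + 1 = n)
    (hq : q + k + s + 1 = n) (hxy : x - p = y - s) :
    qbinom n x p * qbinom n ((q + k : ℕ) : ℂ) k * qbinom n y r =
      qbinom n x q * qbinom n ((p + k : ℕ) : ℂ) k * qbinom n y s := by
  have hswap := qdescFact_mul_qdescFact_swap n (x := x) (y := y) (p := p) (q := q) (r := r)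
    (s := s) (by omega) hxy
  have hfact : qfact n (q + k) * qfact n s = qfact n (p + k) * qfact n r := by
    rw [← qfact_add_of_add_one_eq hq, ← qfact_add_of_add_one_eq hp,
      show q + k + s = p + k + r by omega]
  have hqk := qfact_add n q k
  have hpk := qfact_add n p k
  have := qfact_ne_zero (show p < n by omega)
  have := qfact_ne_zero (show q < n by omega)
  have := qfact_ne_zero (show k < n by omega)
  have := qfact_ne_zero (show r < n by omega)
  have := qfact_ne_zero (show s < n by omega)
  simp only [qbinom_eq_qdescFact_div_qfact]
  field_simp
  linear_combination
    -(qdescFact n x p * qdescFact n y r * qfact n s) * hqk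
      + qdescFact n x p * qdescFact n y r * hfact
      + qdescFact n x p * qdescFact n y r * qfact n r * hpk
      + qfact n r * qdescFact n ((p + k : ℕ) : ℂ) k * qfact n p * hswap

theorem qbinom_triple_bar_b'_general (n : ℕ) (a b c d e f : ℤ)
    (habc : Admissible n a b c) (z : ℤ)
    (hs : max (max 0 ((n : ℤ) - 1 - 2 * e))
        (max ((d + f - b) - (d + e - c)) ((b + f - d) + (c + d - e) - ((n : ℤ) - 1))) ≤ z)
    (hS : z ≤ min (min (c + d - e) (a + f - e))
        (min ((n : ℤ) - 1 - (a + e - f)) ((n : ℤ) - 1 - (d + e - c)))) :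
    qbinomZ n (2 * c) (a + b + c + 1 - n) *
      qbinomZ n ((b + c - a) + (a + f - e) - z) (b + c - a) *
      qbinomZ n ((a + e - f) + z) (a + c - b) =
    qbinomZ n (2 * c) (a + ((n : ℤ) - 1 - b) + c + 1 - n) *
      qbinomZ n ((((n : ℤ) - 1 - b) + c - a) + (a + f - e) - z)
        (((n : ℤ) - 1 - b) + c - a) *
      qbinomZ n ((a + e - f) + z) (a + c - ((n : ℤ) - 1 - b)) := by
  obtain ⟨-, -, -, -, -, -, -, -, -, hab, hbc, -, -, -⟩ := habc
  obtain ⟨p, hp⟩ : ∃ p : ℕ, (p : ℤ) = n - 1 - a - b + c := ⟨_, Int.toNat_of_nonneg (by omega)⟩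
  obtain ⟨q, hq⟩ : ∃ q : ℕ, (q : ℤ) = b + c - a := ⟨_, Int.toNat_of_nonneg (by omega)⟩
  obtain ⟨k, hk⟩ : ∃ k : ℕ, (k : ℤ) = a + f - e - z := ⟨_, Int.toNat_of_nonneg (by omega)⟩
  obtain ⟨r, hr⟩ : ∃ r : ℕ, (r : ℤ) = b + e - c - f + z := ⟨_, Int.toNat_of_nonneg (by omega)⟩
  obtain ⟨s, hs'⟩ : ∃ s : ℕ, (s : ℤ) = n - 1 - b - c - f + e + z :=
    ⟨_, Int.toNat_of_nonneg (by omega)⟩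
  have key := qbinom_triple_swap (n := n) (x := ((2 * c : ℤ) : ℂ)) (y := ((a + e - f + z : ℤ) : ℂ))
    (p := p) (q := q) (k := k) (r := r) (s := s) (by omega) (by omega)
    (by exact_mod_cast (show 2 * c - p = a + e - f + z - s by omega))
  unfold qbinomZ
  convert key using 4
  all_goals first | omega | (rw [← Int.cast_natCast (R := ℂ)]; congr 1; omega)

/-- the `b ↦ n-1-b` invariance of the other product of three quantum
binomials appearing in the proof of Lemma (Appendix B). -/
theorem qbinom_triple_bar_b' (n : ℕ) (hn : 2 ≤ n) (a b c d e f : ℤ)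
    (habc : Admissible n a b c) (hcde : Admissible n c d e)
    (haef : Admissible n a e f) (hbdf : Admissible n b d f) (z : ℤ)
    (hs : max (max 0 ((n : ℤ) - 1 - 2 * e))
        (max ((d + f - b) - (d + e - c)) ((b + f - d) + (c + d - e) - ((n : ℤ) - 1))) ≤ z)
    (hS : z ≤ min (min (c + d - e) (a + f - e))
        (min ((n : ℤ) - 1 - (a + e - f)) ((n : ℤ) - 1 - (d + e - c)))) :
    qbinomZ n (2 * c) (a + b + c + 1 - n) *
      qbinomZ n ((b + c - a) + (a + f - e) - z) (b + c - a) *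
      qbinomZ n ((a + e - f) + z) (a + c - b) =
    qbinomZ n (2 * c) (a + ((n : ℤ) - 1 - b) + c + 1 - n) *
      qbinomZ n ((((n : ℤ) - 1 - b) + c - a) + (a + f - e) - z)
        (((n : ℤ) - 1 - b) + c - a) *
      qbinomZ n ((a + e - f) + z) (a + c - ((n : ℤ) - 1 - b)) :=
  qbinom_triple_bar_b'_general n a b c d e f habc z hs hS
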